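/- arXiv:1101.1784 — 4 statements merged into one kernel-verified Lean document; each statement's English description precedes it below -/
import Mathlib

section
/- L-coveredness is transitive under substitution images: if a set of patterns L is stable under a map Σ (sending faces to sets of faces, extended to sets by union), and D is a nonempty L-covered set of faces with Σ(e) nonempty for each face e, then Σ(D) is L-covered. -/
/-- An `L`-chain in `D` from face `e` to face `f`. -/
def LChain {F : Type*} (L : Set (Finset F)) (D : Set F) (e f : F) : Prop :=
  ∃ (n : ℕ) (p : Fin (n + 1) → Finset F),
    (∀ k, p k ∈ L) ∧ e ∈ p 0 ∧ f ∈ p (Fin.last n) ∧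
    (∀ k : Fin n, ((p k.castSucc : Set F) ∩ (p k.succ : Set F)).Nonempty) ∧
    (∀ k, (p k : Set F) ⊆ D)

/-- `D` is `L`-covered: any two faces of `D` are joined by an `L`-chain in `D`. -/
def LCovered {F : Type*} (L : Set (Finset F)) (D : Set F) : Prop :=
  ∀ e ∈ D, ∀ f ∈ D, LChain L D e f

/-- The image of a set of faces under `Σ`. -/
def substImage {F : Type*} (Sb : F → Set F) (D : Set F) : Set F :=
  ⋃ e ∈ D, Sb e

theorem LChain.mono {F : Type*} {L : Set (Finset F)} {D D' : Set F} {e f : F}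
    (hDD' : D ⊆ D') (h : LChain L D e f) : LChain L D' e f := by
  obtain ⟨n, p, h1, h2, h3, h4, h5⟩ := h
  exact ⟨n, p, h1, h2, h3, h4, fun k => (h5 k).trans hDD'⟩

theorem LChain.snoc {F : Type*} {L : Set (Finset F)} {D : Set F} {a b c : F}
    (h : LChain L D a b) {q : Finset F} (hq : q ∈ L) (hqD : (q : Set F) ⊆ D)
    (hbq : b ∈ q) (hcq : c ∈ q) : LChain L D a c := by
  obtain ⟨n, p, h1, h2, h3, h4, h5⟩ := h
  refine ⟨n + 1, Fin.snoc (α := fun _ => Finset F) p q, ?_, ?_, ?_, ?_, ?_⟩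
  · intro k
    induction k using Fin.lastCases with
    | last => simpa using hq
    | cast i => simpa using h1 i
  · have : (0 : Fin (n + 2)) = Fin.castSucc 0 := rfl
    rw [this, Fin.snoc_castSucc]; exact h2
  · simpa using hcq
  · intro k
    induction k using Fin.lastCases with
    | last =>
        rw [Fin.succ_last, Fin.snoc_castSucc, Fin.snoc_last]
        exact ⟨b, h3, hbq⟩
    | cast i =>
        rw [Fin.succ_castSucc, Fin.snoc_castSucc, Fin.snoc_castSucc]
        exact h4 i
  · intro k
    induction k using Fin.lastCases with
    | last => simpa using hqD
    | cast i => simpa using h5 i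

theorem LChain.trans_aux {F : Type*} {L : Set (Finset F)} {D : Set F} :
    ∀ (m : ℕ) (a b c : F) (q : Fin (m + 1) → Finset F),
      LChain L D a b → (∀ k, q k ∈ L) → b ∈ q 0 → c ∈ q (Fin.last m) →
      (∀ k : Fin m, ((q k.castSucc : Set F) ∩ (q k.succ : Set F)).Nonempty) →
      (∀ k, (q k : Set F) ⊆ D) → LChain L D a c := by
  intro m
  induction m with
  | zero =>
      intro a b c q hab h1 h2 h3 _ h5
      exact hab.snoc (h1 0) (h5 0) h2 h3
  | succ m ih =>
      intro a b c q hab h1 h2 h3 h4 h5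
      obtain ⟨z, hz0, hz1⟩ := h4 0
      have hab' : LChain L D a z := hab.snoc (h1 0) (h5 0) h2 hz0
      refine ih a z c (fun k => q k.succ) hab' (fun k => h1 _) ?_ ?_ ?_ (fun k => h5 _)
      · simpa using hz1
      · show c ∈ q (Fin.succ (Fin.last m))
        rw [Fin.succ_last]
        exact h3
      · intro k
        have := h4 k.succ
        rwa [← Fin.succ_castSucc] at this

theorem LChain.trans {F : Type*} {L : Set (Finset F)} {D : Set F} {a b c : F}
    (hab : LChain L D a b) (hbc : LChain L D b c) : LChain L D a c := by
  obtain ⟨m, q, h1, h2, h3, h4, h5⟩ := hbc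
  exact LChain.trans_aux m a b c q hab h1 h2 h3 h4 h5

theorem substImage_mono {F : Type*} (Sb : F → Set F) {D D' : Set F} (h : D ⊆ D') :
    substImage Sb D ⊆ substImage Sb D' := by
  intro x hx
  simp only [substImage, Set.mem_iUnion] at hx ⊢
  obtain ⟨e, he, hxe⟩ := hx
  exact ⟨e, h he, hxe⟩

/-- If `L` is stable under `Σ` and `D` is a nonempty `L`-covered set of faces with
`Σ e` nonempty for every face, then `Σ(D)` is `L`-covered. -/
theorem lcovered_substImage {F : Type*} (L : Set (Finset F)) (Sb : F → Set F)
    (hstable : ∀ p ∈ L, LCovered L (substImage Sb (p : Set F)))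
    (D : Set F) (hD : D.Nonempty) (hne : ∀ e : F, (Sb e).Nonempty)
    (hcov : LCovered L D) :
    LCovered L (substImage Sb D) := by
  intro x hx y hy
  simp only [substImage, Set.mem_iUnion] at hx hy
  obtain ⟨e, heD, hxe⟩ := hx
  obtain ⟨f, hfD, hyf⟩ := hy
  obtain ⟨n, p, h1, h2, h3, h4, h5⟩ := hcov e heD f hfD
  -- chain in Σ(p k) gives chain in Σ(D)
  have step : ∀ (k : Fin (n+1)) (u v : F), u ∈ substImage Sb (p k : Set F) →
      v ∈ substImage Sb (p k : Set F) → LChain L (substImage Sb D) u v := by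
    intro k u v hu hv
    exact (hstable (p k) (h1 k) u hu v hv).mono (substImage_mono Sb (h5 k))
  have mem : ∀ (k : Fin (n+1)) (g : F), g ∈ p k → ∀ z ∈ Sb g,
      z ∈ substImage Sb (p k : Set F) := by
    intro k g hg z hz
    simp only [substImage, Set.mem_iUnion]
    exact ⟨g, hg, hz⟩
  have key : ∀ k : ℕ, ∀ hk : k < n + 1, ∀ w ∈ substImage Sb (p ⟨k, hk⟩ : Set F),
      LChain L (substImage Sb D) x w := by
    intro k
    induction k with
    | zero =>
        intro hk w hw
        exact step 0 x w (mem 0 e h2 x hxe) hw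
    | succ k ih =>
        intro hk w hw
        have hkn : k < n := Nat.lt_of_succ_lt_succ hk
        obtain ⟨g, hg1, hg2⟩ := h4 ⟨k, hkn⟩
        obtain ⟨z, hz⟩ := hne g
        have hc : (Fin.castSucc ⟨k, hkn⟩ : Fin (n+1)) = ⟨k, Nat.lt_of_lt_of_le hkn (Nat.le_succ n)⟩ := rfl
        have hs : (Fin.succ ⟨k, hkn⟩ : Fin (n+1)) = ⟨k+1, hk⟩ := rfl
        rw [hc] at hg1; rw [hs] at hg2
        have hxz : LChain L (substImage Sb D) x z :=
          ih _ z (mem _ g hg1 z hz)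
        exact hxz.trans (step ⟨k+1, hk⟩ z w (mem _ g hg2 z hz) hw)
  have hlast : y ∈ substImage Sb (p (Fin.last n) : Set F) := mem _ f h3 y hyf
  exact key n (Nat.lt_succ_self n) y (by simpa [Fin.last] using hlast)
end

section
/- Any finite product of the three Arnoux-Rauzy substitutions in which each σ₁, σ₂, σ₃ appears at least once has a primitive (i.e., some power is entrywise positive) incidence matrix. -/
/-- Incidence matrices of the Arnoux-Rauzy substitutions σ₁, σ₂, σ₃. -/
def ARMatrix : Fin 3 → Matrix (Fin 3) (Fin 3) ℕ
  | 0 => !![1, 1, 1; 0, 1, 0; 0, 0, 1]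
  | 1 => !![1, 0, 0; 1, 1, 1; 0, 0, 1]
  | 2 => !![1, 0, 0; 0, 1, 0; 1, 1, 1]

lemma AR_diag (a i : Fin 3) : 1 ≤ ARMatrix a i i := by
  fin_cases a <;> fin_cases i <;> decide

lemma AR_row (i j : Fin 3) : 1 ≤ ARMatrix i i j := by
  fin_cases i <;> fin_cases j <;> decide

def DiagPos (M : Matrix (Fin 3) (Fin 3) ℕ) : Prop := ∀ i, 1 ≤ M i i

lemma mul_left_ge {P B : Matrix (Fin 3) (Fin 3) ℕ} (hP : DiagPos P) (i j : Fin 3) :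
    B i j ≤ (P * B) i j := by
  have h : P i i * B i j ≤ ∑ k, P i k * B k j :=
    Finset.single_le_sum (f := fun k => P i k * B k j) (fun k _ => Nat.zero_le _)
      (Finset.mem_univ i)
  rw [Matrix.mul_apply]
  exact le_trans (Nat.le_mul_of_pos_left _ (hP i)) h

lemma mul_right_ge {B Q : Matrix (Fin 3) (Fin 3) ℕ} (hQ : DiagPos Q) (i j : Fin 3) :
    B i j ≤ (B * Q) i j := by
  have h : B i j * Q j j ≤ ∑ k, B i k * Q k j :=
    Finset.single_le_sum (f := fun k => B i k * Q k j) (fun k _ => Nat.zero_le _)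
      (Finset.mem_univ j)
  rw [Matrix.mul_apply]
  exact le_trans (Nat.le_mul_of_pos_right _ (hQ j)) h

lemma diagPos_prod (l : List (Fin 3)) : DiagPos (l.map ARMatrix).prod := by
  induction l with
  | nil => intro i; simp [Matrix.one_apply]
  | cons a t ih =>
    intro i
    simp only [List.map_cons, List.prod_cons]
    calc 1 ≤ (t.map ARMatrix).prod i i := ih i
      _ ≤ (ARMatrix a * (t.map ARMatrix).prod) i i := mul_left_ge (AR_diag a) i i

lemma prod_ge_mem {w : List (Fin 3)} {a : Fin 3} (h : a ∈ w) (i j : Fin 3) :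
    ARMatrix a i j ≤ (w.map ARMatrix).prod i j := by
  obtain ⟨s, t, rfl⟩ := List.append_of_mem h
  simp only [List.map_append, List.map_cons, List.prod_append, List.prod_cons]
  calc ARMatrix a i j ≤ (ARMatrix a * (t.map ARMatrix).prod) i j :=
        mul_right_ge (diagPos_prod t) i j
    _ ≤ ((s.map ARMatrix).prod * (ARMatrix a * (t.map ARMatrix).prod)) i j :=
        mul_left_ge (diagPos_prod s) i j

/-- The incidence matrix of any finite product of Arnoux-Rauzy substitutions in
which each of σ₁, σ₂, σ₃ appears at least once is primitive: some power is
entrywise positive. -/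
theorem arnoux_rauzy_product_primitive (w : List (Fin 3)) (hw : ∀ i : Fin 3, i ∈ w) :
    ∃ k : ℕ, 1 ≤ k ∧ ∀ i j : Fin 3, 0 < ((w.map ARMatrix).prod ^ k) i j := by
  refine ⟨1, le_refl 1, fun i j => ?_⟩
  rw [pow_one]
  calc 0 < ARMatrix i i j := AR_row i j
    _ ≤ (w.map ARMatrix).prod i j := prod_ge_mem (hw i) i j
end

section
/- Generalized substitutions are contravariant under composition: E₁*(σ∘σ') = E₁*(σ') ∘ E₁*(σ) for unimodular substitutions σ, σ' on {1,2,3}. -/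
abbrev Face := (Fin 3 → ℤ) × Fin 3

/-- Abelianization (letter-count vector) of a word. -/
def abel (s : List (Fin 3)) : Fin 3 → ℤ := fun i => s.count i

/-- Incidence matrix of a substitution. -/
def incidence (σ : Fin 3 → List (Fin 3)) : Matrix (Fin 3) (Fin 3) ℤ :=
  fun i j => (σ j).count i

/-- Composition of substitutions: (σ ∘ σ')(a) = σ(σ'(a)). -/
def substComp (σ σ' : Fin 3 → List (Fin 3)) : Fin 3 → List (Fin 3) :=
  fun a => (σ' a).flatMap σ

/-- The generalized substitution E₁*(σ) on a single face. -/
def E1star (σ : Fin 3 → List (Fin 3)) (f : Face) : Set Face :=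
  { g | ∃ (j : Fin 3) (p s : List (Fin 3)),
      σ j = p ++ f.2 :: s ∧ g = ((incidence σ)⁻¹.mulVec (f.1 + abel s), j) }

/-- E₁* extended to sets of faces, by union. -/
def E1starSet (σ : Fin 3 → List (Fin 3)) (X : Set Face) : Set Face :=
  ⋃ f ∈ X, E1star σ f

lemma abel_append (l m : List (Fin 3)) : abel (l ++ m) = abel l + abel m := by
  funext i; simp [abel, List.count_append]

lemma abel_flatMap (σ : Fin 3 → List (Fin 3)) (l : List (Fin 3)) :
    abel (l.flatMap σ) = (incidence σ).mulVec (abel l) := by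
  induction l with
  | nil =>
    funext i
    simp [abel, Matrix.mulVec, dotProduct, List.count_nil]
  | cons a l ih =>
    have h1 : abel (a :: l) = Pi.single a 1 + abel l := by
      funext i
      by_cases h : i = a
      · subst h; simp [abel, List.count_cons, Pi.single_apply, add_comm]
      · have h' : ¬ a = i := fun h'' => h h''.symm
        simp [abel, List.count_cons, Pi.single_apply, h, h']
    rw [List.flatMap_cons, abel_append, ih, h1, Matrix.mulVec_add,
      Matrix.mulVec_single]
    funext i
    simp [incidence, abel]

lemma incidence_comp (σ σ' : Fin 3 → List (Fin 3)) :
    incidence (substComp σ σ') = incidence σ * incidence σ' := by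
  ext i j
  have := congrFun (abel_flatMap σ (σ' j)) i
  simpa [incidence, substComp, abel, Matrix.mul_apply, Matrix.mulVec,
    dotProduct, Fin.sum_univ_three] using this

/-- Factorization of flatMap around a distinguished letter. -/
lemma flatMap_factor (σ : Fin 3 → List (Fin 3)) :
    ∀ (L P : List (Fin 3)) (i : Fin 3) (S : List (Fin 3)),
      L.flatMap σ = P ++ i :: S →
      ∃ p' j s' p s, L = p' ++ j :: s' ∧ σ j = p ++ i :: s ∧
        S = s ++ s'.flatMap σ := by
  intro L
  induction L with
  | nil => intro P i S h; simp at h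
  | cons a L ih =>
    intro P i S h
    rw [List.flatMap_cons] at h
    rcases List.append_eq_append_iff.mp h with ⟨t, hP, ht⟩ | ⟨t, hσa, ht⟩
    · obtain ⟨p', j, s', p, s, hL, hj, hS⟩ := ih t i S ht
      exact ⟨a :: p', j, s', p, s, by rw [hL]; rfl, hj, hS⟩
    · cases t with
      | nil =>
        simp only [List.append_nil] at hσa
        simp only [List.nil_append] at ht
        obtain ⟨p', j, s', p, s, hL, hj, hS⟩ := ih [] i S ht.symm
        exact ⟨a :: p', j, s', p, s, by rw [hL]; rfl, hj, hS⟩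
      | cons b t' =>
        obtain ⟨hb, hS⟩ := List.cons_eq_cons.mp ht
        exact ⟨[], a, L, P, t', rfl, by rw [hσa, hb], hS⟩

lemma key_vec (σ σ' : Fin 3 → List (Fin 3)) (hσ : IsUnit (incidence σ).det)
    (x : Fin 3 → ℤ) (s s' : List (Fin 3)) :
    (incidence (substComp σ σ'))⁻¹.mulVec (x + abel (s ++ s'.flatMap σ)) =
      (incidence σ')⁻¹.mulVec
        ((incidence σ)⁻¹.mulVec (x + abel s) + abel s') := by
  rw [incidence_comp, Matrix.mul_inv_rev, abel_append, abel_flatMap,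
    ← Matrix.mulVec_mulVec, ← add_assoc, Matrix.mulVec_add,
    Matrix.mulVec_mulVec, Matrix.nonsing_inv_mul _ hσ, Matrix.one_mulVec]

/-- Contravariance under composition: E₁*(σ ∘ σ') = E₁*(σ') ∘ E₁*(σ). -/
theorem E1star_comp (σ σ' : Fin 3 → List (Fin 3))
    (hσ : IsUnit (incidence σ).det) (hσ' : IsUnit (incidence σ').det)
    (X : Set Face) :
    E1starSet (substComp σ σ') X = E1starSet σ' (E1starSet σ X) := by
  ext g
  simp only [E1starSet, E1star, Set.mem_iUnion, Set.mem_setOf_eq]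
  constructor
  · rintro ⟨f, hf, a, P, S, hfac, rfl⟩
    obtain ⟨p', j, s', p, s, hL, hj, hS⟩ :=
      flatMap_factor σ (σ' a) P f.2 S hfac
    refine ⟨((incidence σ)⁻¹.mulVec (f.1 + abel s), j),
      ⟨f, hf, j, p, s, hj, rfl⟩, a, p', s', hL, ?_⟩
    rw [hS, key_vec σ σ' hσ]
  · rintro ⟨h, ⟨f, hf, j, p, s, hj, rfl⟩, a, p', s', hj', rfl⟩
    refine ⟨f, hf, a, p'.flatMap σ ++ p, s ++ s'.flatMap σ, ?_, ?_⟩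
    · show (σ' a).flatMap σ = _
      rw [hj', List.flatMap_append, List.flatMap_cons, hj]
      simp
    · simp only
      rw [key_vec σ σ' hσ]
end

section
/- The image of a discrete plane under a generalized substitution is a discrete plane: for a unimodular substitution σ with nonnegative incidence matrix M and v with positive coordinates, E₁*(σ)(P_v) = P_{Mᵀv}, using the combinatorial definition of discrete planes. -/
open Finset in
def dotIR (x : Fin 3 → ℤ) (v : Fin 3 → ℝ) : ℝ := ∑ k, (x k : ℝ) * v k

def discretePlane (v : Fin 3 → ℝ) : Set Face :=
  { f | 0 ≤ dotIR f.1 v ∧ dotIR f.1 v < v f.2 }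

open Finset

lemma dotIR_add (x y : Fin 3 → ℤ) (v : Fin 3 → ℝ) :
    dotIR (x + y) v = dotIR x v + dotIR y v := by
  simp [dotIR, add_mul, Finset.sum_add_distrib]

lemma dotIR_abel (s : List (Fin 3)) (v : Fin 3 → ℝ) :
    dotIR (abel s) v = (s.map v).sum := by
  induction s with
  | nil => simp [dotIR, abel]
  | cons a t ih =>
    simp only [List.map_cons, List.sum_cons, ← ih]
    simp only [dotIR, abel, List.count_cons]
    push_cast
    simp only [beq_iff_eq, add_mul, Finset.sum_add_distrib, ite_mul, one_mul, zero_mul]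
    rw [Finset.sum_ite_eq]
    simp [add_comm]

lemma dotIR_transpose (M : Matrix (Fin 3) (Fin 3) ℤ) (y : Fin 3 → ℤ) (v : Fin 3 → ℝ) :
    dotIR y (fun i => ∑ k, (M k i : ℝ) * v k) = dotIR (M.mulVec y) v := by
  simp only [dotIR, Matrix.mulVec, dotProduct]
  push_cast
  simp only [Finset.mul_sum, Finset.sum_mul]
  rw [Finset.sum_comm]
  congr 1; ext k; congr 1; ext i; ring

lemma list_split (v : Fin 3 → ℝ) (w : List (Fin 3)) :
    ∀ T : ℝ, 0 ≤ T → T < (w.map v).sum →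
    ∃ p i s, w = p ++ i :: s ∧ (s.map v).sum ≤ T ∧ T < v i + (s.map v).sum := by
  induction w with
  | nil => intro T h0 h1; simp at h1; linarith
  | cons a t ih =>
    intro T h0 h1
    by_cases h : T < (t.map v).sum
    · obtain ⟨p, i, s, heq, h2, h3⟩ := ih T h0 h
      exact ⟨a :: p, i, s, by rw [heq]; rfl, h2, h3⟩
    · push_neg at h
      refine ⟨[], a, t, rfl, h, ?_⟩
      simpa [add_comm] using h1

lemma map_sum_nonneg (v : Fin 3 → ℝ) (hv : ∀ k, 0 < v k) (p : List (Fin 3)) :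
    0 ≤ (p.map v).sum := by
  apply List.sum_nonneg
  intro x hx
  obtain ⟨a, _, rfl⟩ := List.mem_map.mp hx
  exact (hv a).le

open Finset in
/-- The image of a discrete plane under a generalized substitution is the discrete
plane of normal vector Mᵀv: E₁*(σ)(P_v) = P_{Mᵀv}. -/
theorem E1star_discretePlane (σ : Fin 3 → List (Fin 3))
    (hσ : IsUnit (incidence σ).det)
    (v : Fin 3 → ℝ) (hv : ∀ k, 0 < v k)
    (hMv : ∀ i, 0 < ∑ k, ((incidence σ) k i : ℝ) * v k) :
    E1starSet σ (discretePlane v) =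
      discretePlane (fun i => ∑ k, ((incidence σ) k i : ℝ) * v k) := by
  set M := incidence σ with hM
  set w : Fin 3 → ℝ := fun i => ∑ k, (M k i : ℝ) * v k with hw
  have hwj : ∀ j, w j = ((σ j).map v).sum := by
    intro j
    rw [← dotIR_abel]
    rfl
  have hMinv : ∀ z : Fin 3 → ℤ, M.mulVec (M⁻¹.mulVec z) = z := by
    intro z
    rw [Matrix.mulVec_mulVec, Matrix.mul_nonsing_inv _ hσ, Matrix.one_mulVec]
  have hinvM : ∀ z : Fin 3 → ℤ, M⁻¹.mulVec (M.mulVec z) = z := by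
    intro z
    rw [Matrix.mulVec_mulVec, Matrix.nonsing_inv_mul _ hσ, Matrix.one_mulVec]
  ext g
  constructor
  · intro hg
    rw [E1starSet, Set.mem_iUnion₂] at hg
    obtain ⟨⟨x, i⟩, ⟨hx0, hx1⟩, j, p, s, hspl, rfl⟩ := hg
    have hdot : dotIR (M⁻¹.mulVec (x + abel s)) w = dotIR x v + (s.map v).sum := by
      rw [dotIR_transpose, hMinv, dotIR_add, dotIR_abel]
    constructor
    · show (0 : ℝ) ≤ dotIR (M⁻¹.mulVec (x + abel s)) w
      rw [hdot]
      have := map_sum_nonneg v hv s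
      have hx0' : (0:ℝ) ≤ dotIR x v := hx0
      linarith
    · show dotIR (M⁻¹.mulVec (x + abel s)) w < w j
      rw [hdot, hwj, hspl]
      have := map_sum_nonneg v hv p
      simp only [List.map_append, List.sum_append, List.map_cons, List.sum_cons]
      have hx1' : dotIR x v < v i := hx1
      linarith
  · rintro ⟨h0, h1⟩
    obtain ⟨y, j⟩ := g
    set T : ℝ := dotIR (M.mulVec y) v with hT
    have hTy : dotIR y w = T := dotIR_transpose M y v
    have h0' : 0 ≤ T := by rw [← hTy]; exact h0
    have h1' : T < ((σ j).map v).sum := by rw [← hTy, ← hwj]; exact h1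
    obtain ⟨p, i, s, hspl, hs1, hs2⟩ := list_split v (σ j) T h0' h1'
    rw [E1starSet, Set.mem_iUnion₂]
    refine ⟨(M.mulVec y - abel s, i), ?_, j, p, s, hspl, ?_⟩
    · have hds : dotIR (M.mulVec y - abel s) v = T - (s.map v).sum := by
        have h := dotIR_add (M.mulVec y - abel s) (abel s) v
        rw [sub_add_cancel, dotIR_abel] at h
        linarith
      exact ⟨by simp only [hds]; linarith, by simp only [hds]; linarith⟩
    · simp only
      rw [sub_add_cancel, ← hM, hinvM]
end
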